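/- arXiv:0903.0048 — 2 statements merged into one kernel-verified Lean document; each statement's English description precedes it below -/
import Mathlib

section
/- Let θ and ζ be smooth functions on T*(Ω×ℝ) solving the eikonal system ⟨dθ,dθ⟩ − ζ⟨dζ,dζ⟩ = 0, ⟨dθ,dζ⟩ = 0 for the metric bilinear form ⟨da,db⟩ = ∂ₓa∂ₓb + (1+x·b(y))∂ᵧa∂ᵧb − ∂ₜa∂ₜb, and let Φⁿ = θ + η^{1/3}ξζ + ηξ³/3 + (4/3)n(−ζ₀)^{3/2}(η,τ). Then the function ξ² + η^{−2/3}ζ is constant along the integral curves of the Hamiltonian-type vector field ⟨2dΦⁿ, d·⟩ − η^{−1/3}⟨dζ,dζ⟩∂_ξ, i.e. the system ẋ = 2(∂ₓθ + η^{1/3}ξ∂ₓζ), ẏ = 2(1+x·b(y))(∂ᵧθ + η^{1/3}ξ∂ᵧζ), ṫ = −2τ, ξ̇ = −η^{−1/3}⟨dζ,dζ⟩. -/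
/-- `∂ₓ` of a function `θ(x,y,t,η,τ)`. -/
noncomputable def dX5 (F : ℝ → ℝ → ℝ → ℝ → ℝ → ℝ) (x y t η τ : ℝ) : ℝ :=
  deriv (fun x' => F x' y t η τ) x

/-- `∂ᵧ` of a function `θ(x,y,t,η,τ)`. -/
noncomputable def dY5 (F : ℝ → ℝ → ℝ → ℝ → ℝ → ℝ) (x y t η τ : ℝ) : ℝ :=
  deriv (fun y' => F x y' t η τ) y

/-- `∂ₜ` of a function `θ(x,y,t,η,τ)`. -/
noncomputable def dT5 (F : ℝ → ℝ → ℝ → ℝ → ℝ → ℝ) (x y t η τ : ℝ) : ℝ :=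
  deriv (fun t' => F x y t' η τ) t

/-- `∂ₓ` of a function `ζ(x,y,η,τ)` (independent of `t`). -/
noncomputable def dX4 (F : ℝ → ℝ → ℝ → ℝ → ℝ) (x y η τ : ℝ) : ℝ :=
  deriv (fun x' => F x' y η τ) x

/-- `∂ᵧ` of a function `ζ(x,y,η,τ)` (independent of `t`). -/
noncomputable def dY4 (F : ℝ → ℝ → ℝ → ℝ → ℝ) (x y η τ : ℝ) : ℝ :=
  deriv (fun y' => F x y' η τ) y

/-- `⟨dθ,dθ⟩` for the metric bilinear form
`⟨da,db⟩ = ∂ₓa ∂ₓb + (1+x·b(y)) ∂ᵧa ∂ᵧb − ∂ₜa ∂ₜb`. -/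
noncomputable def brTT (b : ℝ → ℝ) (θ : ℝ → ℝ → ℝ → ℝ → ℝ → ℝ) (x y t η τ : ℝ) : ℝ :=
  (dX5 θ x y t η τ) ^ 2 + (1 + x * b y) * (dY5 θ x y t η τ) ^ 2 - (dT5 θ x y t η τ) ^ 2

/-- `⟨dθ,dζ⟩` (the `t`-term vanishes since `ζ` does not depend on `t`). -/
noncomputable def brTZ (b : ℝ → ℝ) (θ : ℝ → ℝ → ℝ → ℝ → ℝ → ℝ)
    (ζ : ℝ → ℝ → ℝ → ℝ → ℝ) (x y t η τ : ℝ) : ℝ :=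
  dX5 θ x y t η τ * dX4 ζ x y η τ + (1 + x * b y) * dY5 θ x y t η τ * dY4 ζ x y η τ
    - dT5 θ x y t η τ * 0

/-- `⟨dζ,dζ⟩`. -/
noncomputable def brZZ (b : ℝ → ℝ) (ζ : ℝ → ℝ → ℝ → ℝ → ℝ) (x y η τ : ℝ) : ℝ :=
  (dX4 ζ x y η τ) ^ 2 + (1 + x * b y) * (dY4 ζ x y η τ) ^ 2

/-- If `θ, ζ` are smooth solutions of the eikonal system
`⟨dθ,dθ⟩ = ζ⟨dζ,dζ⟩`, `⟨dθ,dζ⟩ = 0`, then along the integral curves of the system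
`ẋ = 2(∂ₓθ + η^{1/3}ξ∂ₓζ)`, `ẏ = 2(1+x·b(y))(∂ᵧθ + η^{1/3}ξ∂ᵧζ)`, `ṫ = −2τ`,
`ξ̇ = −η^{−1/3}⟨dζ,dζ⟩`, the quantity `ξ² + η^{−2/3}ζ` is conserved. -/
theorem eikonal_first_integral
    (b : ℝ → ℝ) (θ : ℝ → ℝ → ℝ → ℝ → ℝ → ℝ) (ζ : ℝ → ℝ → ℝ → ℝ → ℝ)
    (hb : ContDiff ℝ (⊤ : ℕ∞) b)
    (hθ : ContDiff ℝ (⊤ : ℕ∞) (fun p : ℝ × ℝ × ℝ × ℝ × ℝ =>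
      θ p.1 p.2.1 p.2.2.1 p.2.2.2.1 p.2.2.2.2))
    (hζ : ContDiff ℝ (⊤ : ℕ∞) (fun p : ℝ × ℝ × ℝ × ℝ =>
      ζ p.1 p.2.1 p.2.2.1 p.2.2.2))
    (heik1 : ∀ x y t η' τ', brTT b θ x y t η' τ' = ζ x y η' τ' * brZZ b ζ x y η' τ')
    (heik2 : ∀ x y t η' τ', brTZ b θ ζ x y t η' τ' = 0)
    (η τ : ℝ) (hη : 0 < η)
    (X Y T Ξ : ℝ → ℝ)
    (hX : ∀ s, HasDerivAt X
      (2 * (dX5 θ (X s) (Y s) (T s) η τ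
        + η ^ ((1 : ℝ) / 3) * Ξ s * dX4 ζ (X s) (Y s) η τ)) s)
    (hY : ∀ s, HasDerivAt Y
      (2 * (1 + X s * b (Y s)) * (dY5 θ (X s) (Y s) (T s) η τ
        + η ^ ((1 : ℝ) / 3) * Ξ s * dY4 ζ (X s) (Y s) η τ)) s)
    (hT : ∀ s, HasDerivAt T (-2 * τ) s)
    (hΞ : ∀ s, HasDerivAt Ξ
      (-(η ^ (-(1 : ℝ) / 3)) * brZZ b ζ (X s) (Y s) η τ) s) :
    ∀ s, HasDerivAt (fun s' => (Ξ s') ^ 2 + η ^ (-(2 : ℝ) / 3) * ζ (X s') (Y s') η τ) 0 s := by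

  intro s
  -- G : the map (x,y) ↦ ζ x y η τ
  set G : ℝ × ℝ → ℝ := fun p => ζ p.1 p.2 η τ with hGdef
  have hGc : ContDiff ℝ (⊤ : ℕ∞) G := by
    have : ContDiff ℝ (⊤ : ℕ∞) (fun p : ℝ × ℝ => ((p.1, p.2, η, τ) : ℝ × ℝ × ℝ × ℝ)) := by
      fun_prop
    exact hζ.comp this
  have hGd : ∀ p : ℝ × ℝ, HasFDerivAt G (fderiv ℝ G p) p := fun p =>
    (hGc.differentiable (by simp) p).hasFDerivAt
  -- identify partial derivatives
  have hpart : ∀ x y : ℝ,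
      fderiv ℝ G (x, y) (1, 0) = dX4 ζ x y η τ ∧
      fderiv ℝ G (x, y) (0, 1) = dY4 ζ x y η τ := by
    intro x y
    constructor
    · have h1 : HasDerivAt (fun x' : ℝ => G (x', y)) (fderiv ℝ G (x, y) (1, 0)) x := by
        have := (hGd (x, y)).comp_hasDerivAt x
          ((hasDerivAt_id x).prodMk (hasDerivAt_const x y))
        exact this
      simpa [dX4, hGdef] using h1.deriv.symm
    · have h1 : HasDerivAt (fun y' : ℝ => G (x, y')) (fderiv ℝ G (x, y) (0, 1)) y := by
        have := (hGd (x, y)).comp_hasDerivAt y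
          ((hasDerivAt_const y x).prodMk (hasDerivAt_id y))
        exact this
      simpa [dY4, hGdef] using h1.deriv.symm
  -- derivative of s ↦ ζ (X s) (Y s) η τ
  set x' : ℝ := 2 * (dX5 θ (X s) (Y s) (T s) η τ
        + η ^ ((1 : ℝ) / 3) * Ξ s * dX4 ζ (X s) (Y s) η τ) with hx'
  set y' : ℝ := 2 * (1 + X s * b (Y s)) * (dY5 θ (X s) (Y s) (T s) η τ
        + η ^ ((1 : ℝ) / 3) * Ξ s * dY4 ζ (X s) (Y s) η τ) with hy'
  have hXY : HasDerivAt (fun s' => ((X s', Y s') : ℝ × ℝ)) (x', y') s :=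
    (hX s).prodMk (hY s)
  have hcomp : HasDerivAt (fun s' => ζ (X s') (Y s') η τ)
      (x' * dX4 ζ (X s) (Y s) η τ + y' * dY4 ζ (X s) (Y s) η τ) s := by
    have h := (hGd (X s, Y s)).comp_hasDerivAt s hXY
    have hv : ((x', y') : ℝ × ℝ) = x' • ((1 : ℝ), (0 : ℝ)) + y' • ((0 : ℝ), (1 : ℝ)) := by
      simp [Prod.ext_iff]
    rw [hv, map_add, map_smul, map_smul, (hpart (X s) (Y s)).1,
      (hpart (X s) (Y s)).2] at h
    simp only [smul_eq_mul] at h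
    exact h
  -- combine
  have hfull := ((hΞ s).pow 2).add (hcomp.const_mul (η ^ (-(2 : ℝ) / 3)))
  refine hfull.congr_deriv (Eq.symm ?_)
  have hpow : η ^ (-(2 : ℝ) / 3) * η ^ ((1 : ℝ) / 3) = η ^ (-(1 : ℝ) / 3) := by
    rw [← Real.rpow_add hη]; norm_num
  have heq := heik2 (X s) (Y s) (T s) η τ
  rw [brTZ] at heq
  rw [hx', hy']
  simp only [brZZ]
  linear_combination (-2 * η ^ (-(2 : ℝ) / 3)) * heq
    - 2 * Ξ s * (dX4 ζ (X s) (Y s) η τ ^ 2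
      + (1 + X s * b (Y s)) * dY4 ζ (X s) (Y s) η τ ^ 2) * hpow
end

section
/- In the setting of the previous lemma, along the same ODE system and restricted to the Lagrangian set where ξ² + η^{−2/3}ζ = 0, the function ∂_τθ + η^{1/3}ξ∂_τζ is also constant along the flow. -/
/-- `∂_τ` of a function `θ(x,y,t,η,τ)`. -/
noncomputable def dTau5 (F : ℝ → ℝ → ℝ → ℝ → ℝ → ℝ) (x y t η τ : ℝ) : ℝ :=
  deriv (fun τ' => F x y t η τ') τ

/-- `∂_τ` of a function `ζ(x,y,η,τ)` (independent of `t`). -/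
noncomputable def dTau4 (F : ℝ → ℝ → ℝ → ℝ → ℝ) (x y η τ : ℝ) : ℝ :=
  deriv (fun τ' => F x y η τ') τ

private lemma hasDerivAt_fderiv_apply' {E : Type*} [NormedAddCommGroup E] [NormedSpace ℝ E]
    {Θ : E → ℝ} (hΘ : ContDiff ℝ (⊤ : ℕ∞) Θ) {c : ℝ → E} {V : E} {s : ℝ}
    (hc : HasDerivAt c V s) (v : E) :
    HasDerivAt (fun s' => fderiv ℝ Θ (c s') v) (fderiv ℝ (fderiv ℝ Θ) (c s) V v) s := by
  have h1 : ContDiff ℝ (⊤ : ℕ∞) (fderiv ℝ Θ) := hΘ.fderiv_right (by simp)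
  have h2 : HasFDerivAt (fderiv ℝ Θ) (fderiv ℝ (fderiv ℝ Θ) (c s)) (c s) :=
    (h1.differentiable (by simp) (c s)).hasFDerivAt
  have h3 := ((ContinuousLinearMap.apply ℝ ℝ v).hasFDerivAt.comp (c s) h2).comp_hasDerivAt s hc
  exact h3

private lemma symm_snd' {E : Type*} [NormedAddCommGroup E] [NormedSpace ℝ E]
    {Θ : E → ℝ} (hΘ : ContDiff ℝ (⊤ : ℕ∞) Θ) (p : E) (v w : E) :
    fderiv ℝ (fderiv ℝ Θ) p v w = fderiv ℝ (fderiv ℝ Θ) p w v :=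
  (hΘ.contDiffAt.isSymmSndFDerivAt (by rw [minSmoothness_of_isRCLikeNormedField]; exact WithTop.coe_le_coe.mpr (le_top : (2:ℕ∞) ≤ ⊤))) v w

/-- In the setting of the previous lemma (with `θ` linear in time,
`∂ₜθ = τ`), along the same ODE system and restricted to the Lagrangian set
`{ξ² + η^{−2/3}ζ = 0}`, the quantity `∂_τθ + η^{1/3}ξ∂_τζ` is also conserved along
the flow. -/
theorem eikonal_second_integral_on_lagrangian
    (b : ℝ → ℝ) (θ : ℝ → ℝ → ℝ → ℝ → ℝ → ℝ) (ζ : ℝ → ℝ → ℝ → ℝ → ℝ)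
    (hb : ContDiff ℝ (⊤ : ℕ∞) b)
    (hθ : ContDiff ℝ (⊤ : ℕ∞) (fun p : ℝ × ℝ × ℝ × ℝ × ℝ =>
      θ p.1 p.2.1 p.2.2.1 p.2.2.2.1 p.2.2.2.2))
    (hζ : ContDiff ℝ (⊤ : ℕ∞) (fun p : ℝ × ℝ × ℝ × ℝ =>
      ζ p.1 p.2.1 p.2.2.1 p.2.2.2))
    (hθt : ∀ x y t η' τ', dT5 θ x y t η' τ' = τ')
    (heik1 : ∀ x y t η' τ', brTT b θ x y t η' τ' = ζ x y η' τ' * brZZ b ζ x y η' τ')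
    (heik2 : ∀ x y t η' τ', brTZ b θ ζ x y t η' τ' = 0)
    (η τ : ℝ) (hη : 0 < η)
    (X Y T Ξ : ℝ → ℝ)
    (hX : ∀ s, HasDerivAt X
      (2 * (dX5 θ (X s) (Y s) (T s) η τ
        + η ^ ((1 : ℝ) / 3) * Ξ s * dX4 ζ (X s) (Y s) η τ)) s)
    (hY : ∀ s, HasDerivAt Y
      (2 * (1 + X s * b (Y s)) * (dY5 θ (X s) (Y s) (T s) η τ
        + η ^ ((1 : ℝ) / 3) * Ξ s * dY4 ζ (X s) (Y s) η τ)) s)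
    (hT : ∀ s, HasDerivAt T (-2 * τ) s)
    (hΞ : ∀ s, HasDerivAt Ξ
      (-(η ^ (-(1 : ℝ) / 3)) * brZZ b ζ (X s) (Y s) η τ) s) :
    ∀ s, (Ξ s) ^ 2 + η ^ (-(2 : ℝ) / 3) * ζ (X s) (Y s) η τ = 0 →
      HasDerivAt (fun s' => dTau5 θ (X s') (Y s') (T s') η τ
        + η ^ ((1 : ℝ) / 3) * Ξ s' * dTau4 ζ (X s') (Y s') η τ) 0 s := by
  intro s hset
  set Θ : ℝ × ℝ × ℝ × ℝ × ℝ → ℝ := fun p => θ p.1 p.2.1 p.2.2.1 p.2.2.2.1 p.2.2.2.2 with hΘdef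
  set Zu : ℝ × ℝ × ℝ × ℝ → ℝ := fun p => ζ p.1 p.2.1 p.2.2.1 p.2.2.2 with hZudef
  have hΘd : Differentiable ℝ Θ := hθ.differentiable (by simp)
  have hZd : Differentiable ℝ Zu := hζ.differentiable (by simp)
  -- bridging lemmas for θ
  have hX5e : ∀ x y t η' τ', dX5 θ x y t η' τ'
      = fderiv ℝ Θ (x, y, t, η', τ') (1, 0, 0, 0, 0) := by
    intro x y t η' τ'
    have hc : HasDerivAt (fun x' : ℝ => ((x', y, t, η', τ') : ℝ × ℝ × ℝ × ℝ × ℝ))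
        ((1 : ℝ), (0 : ℝ), (0 : ℝ), (0 : ℝ), (0 : ℝ)) x :=
      (hasDerivAt_id x).prodMk (hasDerivAt_const _ _)
    have h := (hΘd _).hasFDerivAt.comp_hasDerivAt x hc
    have h' : HasDerivAt (fun x' => θ x' y t η' τ')
        ((fderiv ℝ Θ (x, y, t, η', τ')) (1, 0, 0, 0, 0)) x := h
    simp only [dX5]; exact h'.deriv
  have hY5e : ∀ x y t η' τ', dY5 θ x y t η' τ'
      = fderiv ℝ Θ (x, y, t, η', τ') (0, 1, 0, 0, 0) := by
    intro x y t η' τ'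
    have hc : HasDerivAt (fun y' : ℝ => ((x, y', t, η', τ') : ℝ × ℝ × ℝ × ℝ × ℝ))
        ((0 : ℝ), (1 : ℝ), (0 : ℝ), (0 : ℝ), (0 : ℝ)) y :=
      (hasDerivAt_const _ _).prodMk ((hasDerivAt_id y).prodMk (hasDerivAt_const _ _))
    have h := (hΘd _).hasFDerivAt.comp_hasDerivAt y hc
    have h' : HasDerivAt (fun y' => θ x y' t η' τ')
        ((fderiv ℝ Θ (x, y, t, η', τ')) (0, 1, 0, 0, 0)) y := h
    simp only [dY5]; exact h'.deriv
  have hT5e : ∀ x y t η' τ', dT5 θ x y t η' τ'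
      = fderiv ℝ Θ (x, y, t, η', τ') (0, 0, 1, 0, 0) := by
    intro x y t η' τ'
    have hc : HasDerivAt (fun t' : ℝ => ((x, y, t', η', τ') : ℝ × ℝ × ℝ × ℝ × ℝ))
        ((0 : ℝ), (0 : ℝ), (1 : ℝ), (0 : ℝ), (0 : ℝ)) t :=
      (hasDerivAt_const _ _).prodMk ((hasDerivAt_const _ _).prodMk
        ((hasDerivAt_id t).prodMk (hasDerivAt_const _ _)))
    have h := (hΘd _).hasFDerivAt.comp_hasDerivAt t hc
    have h' : HasDerivAt (fun t' => θ x y t' η' τ')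
        ((fderiv ℝ Θ (x, y, t, η', τ')) (0, 0, 1, 0, 0)) t := h
    simp only [dT5]; exact h'.deriv
  have hTau5e : ∀ x y t η' τ', dTau5 θ x y t η' τ'
      = fderiv ℝ Θ (x, y, t, η', τ') (0, 0, 0, 0, 1) := by
    intro x y t η' τ'
    have hc : HasDerivAt (fun τ'' : ℝ => ((x, y, t, η', τ'') : ℝ × ℝ × ℝ × ℝ × ℝ))
        ((0 : ℝ), (0 : ℝ), (0 : ℝ), (0 : ℝ), (1 : ℝ)) τ' :=
      (hasDerivAt_const _ _).prodMk ((hasDerivAt_const _ _).prodMk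
        ((hasDerivAt_const _ _).prodMk ((hasDerivAt_const _ _).prodMk (hasDerivAt_id τ'))))
    have h := (hΘd _).hasFDerivAt.comp_hasDerivAt τ' hc
    have h' : HasDerivAt (fun τ'' => θ x y t η' τ'')
        ((fderiv ℝ Θ (x, y, t, η', τ')) (0, 0, 0, 0, 1)) τ' := h
    simp only [dTau5]; exact h'.deriv
  -- bridging lemmas for ζ
  have hX4e : ∀ x y η' τ', dX4 ζ x y η' τ'
      = fderiv ℝ Zu (x, y, η', τ') (1, 0, 0, 0) := by
    intro x y η' τ'
    have hc : HasDerivAt (fun x' : ℝ => ((x', y, η', τ') : ℝ × ℝ × ℝ × ℝ))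
        ((1 : ℝ), (0 : ℝ), (0 : ℝ), (0 : ℝ)) x :=
      (hasDerivAt_id x).prodMk (hasDerivAt_const _ _)
    have h := (hZd _).hasFDerivAt.comp_hasDerivAt x hc
    have h' : HasDerivAt (fun x' => ζ x' y η' τ')
        ((fderiv ℝ Zu (x, y, η', τ')) (1, 0, 0, 0)) x := h
    simp only [dX4]; exact h'.deriv
  have hY4e : ∀ x y η' τ', dY4 ζ x y η' τ'
      = fderiv ℝ Zu (x, y, η', τ') (0, 1, 0, 0) := by
    intro x y η' τ'
    have hc : HasDerivAt (fun y' : ℝ => ((x, y', η', τ') : ℝ × ℝ × ℝ × ℝ))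
        ((0 : ℝ), (1 : ℝ), (0 : ℝ), (0 : ℝ)) y :=
      (hasDerivAt_const _ _).prodMk ((hasDerivAt_id y).prodMk (hasDerivAt_const _ _))
    have h := (hZd _).hasFDerivAt.comp_hasDerivAt y hc
    have h' : HasDerivAt (fun y' => ζ x y' η' τ')
        ((fderiv ℝ Zu (x, y, η', τ')) (0, 1, 0, 0)) y := h
    simp only [dY4]; exact h'.deriv
  have hTau4e : ∀ x y η' τ', dTau4 ζ x y η' τ'
      = fderiv ℝ Zu (x, y, η', τ') (0, 0, 0, 1) := by
    intro x y η' τ'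
    have hc : HasDerivAt (fun τ'' : ℝ => ((x, y, η', τ'') : ℝ × ℝ × ℝ × ℝ))
        ((0 : ℝ), (0 : ℝ), (0 : ℝ), (1 : ℝ)) τ' :=
      (hasDerivAt_const _ _).prodMk ((hasDerivAt_const _ _).prodMk
        ((hasDerivAt_const _ _).prodMk (hasDerivAt_id τ')))
    have h := (hZd _).hasFDerivAt.comp_hasDerivAt τ' hc
    have h' : HasDerivAt (fun τ'' => ζ x y η' τ'')
        ((fderiv ℝ Zu (x, y, η', τ')) (0, 0, 0, 1)) τ' := h
    simp only [dTau4]; exact h'.deriv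
  -- τ-lines through the current point
  have hl5 : HasDerivAt (fun τ' : ℝ => ((X s, Y s, T s, η, τ') : ℝ × ℝ × ℝ × ℝ × ℝ))
      ((0 : ℝ), (0 : ℝ), (0 : ℝ), (0 : ℝ), (1 : ℝ)) τ :=
    (hasDerivAt_const _ _).prodMk ((hasDerivAt_const _ _).prodMk
      ((hasDerivAt_const _ _).prodMk ((hasDerivAt_const _ _).prodMk (hasDerivAt_id τ))))
  have hl4 : HasDerivAt (fun τ' : ℝ => ((X s, Y s, η, τ') : ℝ × ℝ × ℝ × ℝ))
      ((0 : ℝ), (0 : ℝ), (0 : ℝ), (1 : ℝ)) τ :=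
    (hasDerivAt_const _ _).prodMk ((hasDerivAt_const _ _).prodMk
      ((hasDerivAt_const _ _).prodMk (hasDerivAt_id τ)))
  -- second derivatives along the τ-line
  have hB1 : HasDerivAt (fun τ' => fderiv ℝ Θ (X s, Y s, T s, η, τ') ((1:ℝ), (0:ℝ), (0:ℝ), (0:ℝ), (0:ℝ)))
      (fderiv ℝ (fderiv ℝ Θ) (X s, Y s, T s, η, τ) ((0:ℝ), (0:ℝ), (0:ℝ), (0:ℝ), (1:ℝ)) ((1:ℝ), (0:ℝ), (0:ℝ), (0:ℝ), (0:ℝ))) τ := hasDerivAt_fderiv_apply' hθ hl5 _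
  have hB2 : HasDerivAt (fun τ' => fderiv ℝ Θ (X s, Y s, T s, η, τ') ((0:ℝ), (1:ℝ), (0:ℝ), (0:ℝ), (0:ℝ)))
      (fderiv ℝ (fderiv ℝ Θ) (X s, Y s, T s, η, τ) ((0:ℝ), (0:ℝ), (0:ℝ), (0:ℝ), (1:ℝ)) ((0:ℝ), (1:ℝ), (0:ℝ), (0:ℝ), (0:ℝ))) τ := hasDerivAt_fderiv_apply' hθ hl5 _
  have hB3 : HasDerivAt (fun τ' => fderiv ℝ Θ (X s, Y s, T s, η, τ') ((0:ℝ), (0:ℝ), (1:ℝ), (0:ℝ), (0:ℝ)))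
      (fderiv ℝ (fderiv ℝ Θ) (X s, Y s, T s, η, τ) ((0:ℝ), (0:ℝ), (0:ℝ), (0:ℝ), (1:ℝ)) ((0:ℝ), (0:ℝ), (1:ℝ), (0:ℝ), (0:ℝ))) τ := hasDerivAt_fderiv_apply' hθ hl5 _
  have hD1 : HasDerivAt (fun τ' => fderiv ℝ Zu (X s, Y s, η, τ') ((1:ℝ), (0:ℝ), (0:ℝ), (0:ℝ)))
      (fderiv ℝ (fderiv ℝ Zu) (X s, Y s, η, τ) ((0:ℝ), (0:ℝ), (0:ℝ), (1:ℝ)) ((1:ℝ), (0:ℝ), (0:ℝ), (0:ℝ))) τ := hasDerivAt_fderiv_apply' hζ hl4 _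
  have hD2 : HasDerivAt (fun τ' => fderiv ℝ Zu (X s, Y s, η, τ') ((0:ℝ), (1:ℝ), (0:ℝ), (0:ℝ)))
      (fderiv ℝ (fderiv ℝ Zu) (X s, Y s, η, τ) ((0:ℝ), (0:ℝ), (0:ℝ), (1:ℝ)) ((0:ℝ), (1:ℝ), (0:ℝ), (0:ℝ))) τ := hasDerivAt_fderiv_apply' hζ hl4 _
  have hζτ : HasDerivAt (fun τ' => ζ (X s) (Y s) η τ') (fderiv ℝ Zu (X s, Y s, η, τ) ((0:ℝ), (0:ℝ), (0:ℝ), (1:ℝ))) τ := by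
    have h := (hZd _).hasFDerivAt.comp_hasDerivAt τ hl4
    exact h
  -- B e5 e3 = 1
  have hB53 : fderiv ℝ (fderiv ℝ Θ) (X s, Y s, T s, η, τ) ((0:ℝ), (0:ℝ), (0:ℝ), (0:ℝ), (1:ℝ)) ((0:ℝ), (0:ℝ), (1:ℝ), (0:ℝ), (0:ℝ)) = 1 := by
    have hA3 : (fun τ' => fderiv ℝ Θ (X s, Y s, T s, η, τ') ((0:ℝ), (0:ℝ), (1:ℝ), (0:ℝ), (0:ℝ))) = fun τ' => τ' := by
      funext τ'
      rw [← hT5e, hθt]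
    rw [hA3] at hB3
    exact hB3.unique (hasDerivAt_id τ)
  -- differentiated first eikonal equation
  have hL1 : HasDerivAt (fun τ' => brTT b θ (X s) (Y s) (T s) η τ')
      ((2 : ℕ) * (fderiv ℝ Θ (X s, Y s, T s, η, τ) ((1:ℝ), (0:ℝ), (0:ℝ), (0:ℝ), (0:ℝ))) ^ (2 - 1) * fderiv ℝ (fderiv ℝ Θ) (X s, Y s, T s, η, τ) ((0:ℝ), (0:ℝ), (0:ℝ), (0:ℝ), (1:ℝ)) ((1:ℝ), (0:ℝ), (0:ℝ), (0:ℝ), (0:ℝ))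
        + (1 + X s * b (Y s)) * ((2 : ℕ) * (fderiv ℝ Θ (X s, Y s, T s, η, τ) ((0:ℝ), (1:ℝ), (0:ℝ), (0:ℝ), (0:ℝ))) ^ (2 - 1) * fderiv ℝ (fderiv ℝ Θ) (X s, Y s, T s, η, τ) ((0:ℝ), (0:ℝ), (0:ℝ), (0:ℝ), (1:ℝ)) ((0:ℝ), (1:ℝ), (0:ℝ), (0:ℝ), (0:ℝ)))
        - (2 : ℕ) * τ ^ (2 - 1) * 1) τ := by
    have h := ((hB1.pow 2).add ((hB2.pow 2).const_mul (1 + X s * b (Y s)))).sub ((hasDerivAt_id τ).pow 2)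
    refine h.congr_of_eventuallyEq (Filter.Eventually.of_forall fun τ' => ?_)
    simp only [brTT, hX5e, hY5e, hθt, id_eq, Pi.add_apply, Pi.sub_apply, Pi.pow_apply]
  have hR1 : HasDerivAt (fun τ' => ζ (X s) (Y s) η τ' * brZZ b ζ (X s) (Y s) η τ')
      (fderiv ℝ Zu (X s, Y s, η, τ) ((0:ℝ), (0:ℝ), (0:ℝ), (1:ℝ)) * ((fderiv ℝ Zu (X s, Y s, η, τ) ((1:ℝ), (0:ℝ), (0:ℝ), (0:ℝ))) ^ 2 + (1 + X s * b (Y s)) * (fderiv ℝ Zu (X s, Y s, η, τ) ((0:ℝ), (1:ℝ), (0:ℝ), (0:ℝ))) ^ 2)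
        + ζ (X s) (Y s) η τ * ((2 : ℕ) * (fderiv ℝ Zu (X s, Y s, η, τ) ((1:ℝ), (0:ℝ), (0:ℝ), (0:ℝ))) ^ (2 - 1) * fderiv ℝ (fderiv ℝ Zu) (X s, Y s, η, τ) ((0:ℝ), (0:ℝ), (0:ℝ), (1:ℝ)) ((1:ℝ), (0:ℝ), (0:ℝ), (0:ℝ))
          + (1 + X s * b (Y s)) * ((2 : ℕ) * (fderiv ℝ Zu (X s, Y s, η, τ) ((0:ℝ), (1:ℝ), (0:ℝ), (0:ℝ))) ^ (2 - 1) * fderiv ℝ (fderiv ℝ Zu) (X s, Y s, η, τ) ((0:ℝ), (0:ℝ), (0:ℝ), (1:ℝ)) ((0:ℝ), (1:ℝ), (0:ℝ), (0:ℝ))))) τ := by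
    have h := hζτ.mul ((hD1.pow 2).add ((hD2.pow 2).const_mul (1 + X s * b (Y s))))
    refine h.congr_of_eventuallyEq (Filter.Eventually.of_forall fun τ' => ?_)
    simp only [brZZ, hX4e, hY4e, Pi.add_apply, Pi.mul_apply, Pi.pow_apply]
  have hfe1 : (fun τ' => brTT b θ (X s) (Y s) (T s) η τ')
      = fun τ' => ζ (X s) (Y s) η τ' * brZZ b ζ (X s) (Y s) η τ' :=
    funext fun τ' => heik1 (X s) (Y s) (T s) η τ'
  have E1 := (hfe1 ▸ hL1).unique hR1
  -- differentiated second eikonal equation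
  have hL2 : HasDerivAt (fun τ' => brTZ b θ ζ (X s) (Y s) (T s) η τ')
      ((fderiv ℝ (fderiv ℝ Θ) (X s, Y s, T s, η, τ) ((0:ℝ), (0:ℝ), (0:ℝ), (0:ℝ), (1:ℝ)) ((1:ℝ), (0:ℝ), (0:ℝ), (0:ℝ), (0:ℝ))) * (fderiv ℝ Zu (X s, Y s, η, τ) ((1:ℝ), (0:ℝ), (0:ℝ), (0:ℝ))) + (fderiv ℝ Θ (X s, Y s, T s, η, τ) ((1:ℝ), (0:ℝ), (0:ℝ), (0:ℝ), (0:ℝ))) * (fderiv ℝ (fderiv ℝ Zu) (X s, Y s, η, τ) ((0:ℝ), (0:ℝ), (0:ℝ), (1:ℝ)) ((1:ℝ), (0:ℝ), (0:ℝ), (0:ℝ)))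
        + (((1 + X s * b (Y s)) * (fderiv ℝ (fderiv ℝ Θ) (X s, Y s, T s, η, τ) ((0:ℝ), (0:ℝ), (0:ℝ), (0:ℝ), (1:ℝ)) ((0:ℝ), (1:ℝ), (0:ℝ), (0:ℝ), (0:ℝ)))) * (fderiv ℝ Zu (X s, Y s, η, τ) ((0:ℝ), (1:ℝ), (0:ℝ), (0:ℝ)))
          + ((1 + X s * b (Y s)) * (fderiv ℝ Θ (X s, Y s, T s, η, τ) ((0:ℝ), (1:ℝ), (0:ℝ), (0:ℝ), (0:ℝ)))) * (fderiv ℝ (fderiv ℝ Zu) (X s, Y s, η, τ) ((0:ℝ), (0:ℝ), (0:ℝ), (1:ℝ)) ((0:ℝ), (1:ℝ), (0:ℝ), (0:ℝ))))) τ := by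
    have h := (hB1.mul hD1).add ((hB2.const_mul (1 + X s * b (Y s))).mul hD2)
    refine h.congr_of_eventuallyEq (Filter.Eventually.of_forall fun τ' => ?_)
    simp only [brTZ, hX5e, hY5e, hX4e, hY4e, mul_zero, sub_zero, Pi.add_apply, Pi.mul_apply]
  have hfe2 : (fun τ' => brTZ b θ ζ (X s) (Y s) (T s) η τ') = fun _ => (0 : ℝ) :=
    funext fun τ' => heik2 (X s) (Y s) (T s) η τ'
  have E2 := (hfe2 ▸ hL2).unique (hasDerivAt_const τ (0 : ℝ))
  -- flow curves
  have hXs := hX s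
  have hYs := hY s
  have hTs := hT s
  have hΞs := hΞ s
  have hP5 : HasDerivAt (fun s' : ℝ => ((X s', Y s', T s', η, τ) : ℝ × ℝ × ℝ × ℝ × ℝ))
      ((2 * (dX5 θ (X s) (Y s) (T s) η τ
        + η ^ ((1 : ℝ) / 3) * Ξ s * dX4 ζ (X s) (Y s) η τ),
        2 * (1 + X s * b (Y s)) * (dY5 θ (X s) (Y s) (T s) η τ
        + η ^ ((1 : ℝ) / 3) * Ξ s * dY4 ζ (X s) (Y s) η τ),
        -2 * τ, 0, 0) : ℝ × ℝ × ℝ × ℝ × ℝ) s :=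
    hXs.prodMk (hYs.prodMk (hTs.prodMk ((hasDerivAt_const _ _).prodMk (hasDerivAt_const _ _))))
  have hQ4 : HasDerivAt (fun s' : ℝ => ((X s', Y s', η, τ) : ℝ × ℝ × ℝ × ℝ))
      ((2 * (dX5 θ (X s) (Y s) (T s) η τ
        + η ^ ((1 : ℝ) / 3) * Ξ s * dX4 ζ (X s) (Y s) η τ),
        2 * (1 + X s * b (Y s)) * (dY5 θ (X s) (Y s) (T s) η τ
        + η ^ ((1 : ℝ) / 3) * Ξ s * dY4 ζ (X s) (Y s) η τ),
        0, 0) : ℝ × ℝ × ℝ × ℝ) s :=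
    hXs.prodMk (hYs.prodMk ((hasDerivAt_const _ _).prodMk (hasDerivAt_const _ _)))
  have htot1 : HasDerivAt (fun s' => fderiv ℝ Θ (X s', Y s', T s', η, τ) ((0:ℝ), (0:ℝ), (0:ℝ), (0:ℝ), (1:ℝ)))
      (fderiv ℝ (fderiv ℝ Θ) (X s, Y s, T s, η, τ)
        (2 * (dX5 θ (X s) (Y s) (T s) η τ
          + η ^ ((1 : ℝ) / 3) * Ξ s * dX4 ζ (X s) (Y s) η τ),
          2 * (1 + X s * b (Y s)) * (dY5 θ (X s) (Y s) (T s) η τ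
          + η ^ ((1 : ℝ) / 3) * Ξ s * dY4 ζ (X s) (Y s) η τ),
          -2 * τ, 0, 0) ((0:ℝ), (0:ℝ), (0:ℝ), (0:ℝ), (1:ℝ))) s := hasDerivAt_fderiv_apply' hθ hP5 _
  have htot2z : HasDerivAt (fun s' => fderiv ℝ Zu (X s', Y s', η, τ) ((0:ℝ), (0:ℝ), (0:ℝ), (1:ℝ)))
      (fderiv ℝ (fderiv ℝ Zu) (X s, Y s, η, τ)
        (2 * (dX5 θ (X s) (Y s) (T s) η τ
          + η ^ ((1 : ℝ) / 3) * Ξ s * dX4 ζ (X s) (Y s) η τ),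
          2 * (1 + X s * b (Y s)) * (dY5 θ (X s) (Y s) (T s) η τ
          + η ^ ((1 : ℝ) / 3) * Ξ s * dY4 ζ (X s) (Y s) η τ),
          0, 0) ((0:ℝ), (0:ℝ), (0:ℝ), (1:ℝ))) s := hasDerivAt_fderiv_apply' hζ hQ4 _
  have htot := htot1.add ((hΞs.mul htot2z).const_mul (η ^ ((1 : ℝ) / 3)))
  -- rewrite the goal function into fderiv form
  have hgoalfun : (fun s' => dTau5 θ (X s') (Y s') (T s') η τ
      + η ^ ((1 : ℝ) / 3) * Ξ s' * dTau4 ζ (X s') (Y s') η τ)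
      = fun s' => fderiv ℝ Θ (X s', Y s', T s', η, τ) ((0:ℝ), (0:ℝ), (0:ℝ), (0:ℝ), (1:ℝ))
        + η ^ ((1 : ℝ) / 3) * (Ξ s' * fderiv ℝ Zu (X s', Y s', η, τ) ((0:ℝ), (0:ℝ), (0:ℝ), (1:ℝ))) := by
    funext s'
    rw [hTau5e, hTau4e, mul_assoc]
  rw [hgoalfun]
  convert htot using 1
  case e'_4 => rfl
  case e'_5 => rfl
  case e'_8 => rfl
  -- decompose the bilinear forms
  have hsymΘ := symm_snd' hθ ((X s, Y s, T s, η, τ) : ℝ × ℝ × ℝ × ℝ × ℝ)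
  have hsymZ := symm_snd' hζ ((X s, Y s, η, τ) : ℝ × ℝ × ℝ × ℝ)
  have hBdec : ∀ u v w : ℝ, fderiv ℝ (fderiv ℝ Θ) (X s, Y s, T s, η, τ) ((u, v, w, 0, 0) : ℝ × ℝ × ℝ × ℝ × ℝ) ((0:ℝ), (0:ℝ), (0:ℝ), (0:ℝ), (1:ℝ))
      = u * fderiv ℝ (fderiv ℝ Θ) (X s, Y s, T s, η, τ) ((0:ℝ), (0:ℝ), (0:ℝ), (0:ℝ), (1:ℝ)) ((1:ℝ), (0:ℝ), (0:ℝ), (0:ℝ), (0:ℝ)) + v * fderiv ℝ (fderiv ℝ Θ) (X s, Y s, T s, η, τ) ((0:ℝ), (0:ℝ), (0:ℝ), (0:ℝ), (1:ℝ)) ((0:ℝ), (1:ℝ), (0:ℝ), (0:ℝ), (0:ℝ)) + w * fderiv ℝ (fderiv ℝ Θ) (X s, Y s, T s, η, τ) ((0:ℝ), (0:ℝ), (0:ℝ), (0:ℝ), (1:ℝ)) ((0:ℝ), (0:ℝ), (1:ℝ), (0:ℝ), (0:ℝ)) := by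
    intro u v w
    have hv : ((u, v, w, (0:ℝ), (0:ℝ)) : ℝ × ℝ × ℝ × ℝ × ℝ)
        = u • ((1:ℝ), (0:ℝ), (0:ℝ), (0:ℝ), (0:ℝ)) + v • ((0:ℝ), (1:ℝ), (0:ℝ), (0:ℝ), (0:ℝ)) + w • ((0:ℝ), (0:ℝ), (1:ℝ), (0:ℝ), (0:ℝ)) := by
      simp [Prod.ext_iff]
    rw [hv, map_add, map_add, map_smul, map_smul, map_smul]
    simp only [ContinuousLinearMap.add_apply, ContinuousLinearMap.coe_smul', Pi.smul_apply,
      smul_eq_mul]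
    rw [hsymΘ ((1:ℝ), (0:ℝ), (0:ℝ), (0:ℝ), (0:ℝ)) ((0:ℝ), (0:ℝ), (0:ℝ), (0:ℝ), (1:ℝ)), hsymΘ ((0:ℝ), (1:ℝ), (0:ℝ), (0:ℝ), (0:ℝ)) ((0:ℝ), (0:ℝ), (0:ℝ), (0:ℝ), (1:ℝ)), hsymΘ ((0:ℝ), (0:ℝ), (1:ℝ), (0:ℝ), (0:ℝ)) ((0:ℝ), (0:ℝ), (0:ℝ), (0:ℝ), (1:ℝ))]
  have hDdec : ∀ u v : ℝ, fderiv ℝ (fderiv ℝ Zu) (X s, Y s, η, τ) ((u, v, 0, 0) : ℝ × ℝ × ℝ × ℝ) ((0:ℝ), (0:ℝ), (0:ℝ), (1:ℝ))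
      = u * fderiv ℝ (fderiv ℝ Zu) (X s, Y s, η, τ) ((0:ℝ), (0:ℝ), (0:ℝ), (1:ℝ)) ((1:ℝ), (0:ℝ), (0:ℝ), (0:ℝ)) + v * fderiv ℝ (fderiv ℝ Zu) (X s, Y s, η, τ) ((0:ℝ), (0:ℝ), (0:ℝ), (1:ℝ)) ((0:ℝ), (1:ℝ), (0:ℝ), (0:ℝ)) := by
    intro u v
    have hv : ((u, v, (0:ℝ), (0:ℝ)) : ℝ × ℝ × ℝ × ℝ)
        = u • ((1:ℝ), (0:ℝ), (0:ℝ), (0:ℝ)) + v • ((0:ℝ), (1:ℝ), (0:ℝ), (0:ℝ)) := by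
      simp [Prod.ext_iff]
    rw [hv, map_add, map_smul, map_smul]
    simp only [ContinuousLinearMap.add_apply, ContinuousLinearMap.coe_smul', Pi.smul_apply,
      smul_eq_mul]
    rw [hsymZ ((1:ℝ), (0:ℝ), (0:ℝ), (0:ℝ)) ((0:ℝ), (0:ℝ), (0:ℝ), (1:ℝ)), hsymZ ((0:ℝ), (1:ℝ), (0:ℝ), (0:ℝ)) ((0:ℝ), (0:ℝ), (0:ℝ), (1:ℝ))]
  rw [hBdec, hDdec, hB53]
  -- rpow arithmetic
  have hmu13 : η ^ ((1:ℝ) / 3) * η ^ (-(1:ℝ) / 3) = 1 := by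
    rw [← Real.rpow_add hη]; norm_num
  have h23 : η ^ ((1:ℝ) / 3) * η ^ ((1:ℝ) / 3) * η ^ (-(2:ℝ) / 3) = 1 := by
    rw [← Real.rpow_add hη, ← Real.rpow_add hη]; norm_num
  have hζv : ζ (X s) (Y s) η τ = -(η ^ ((1:ℝ) / 3) * η ^ ((1:ℝ) / 3) * Ξ s ^ 2) := by
    linear_combination η ^ ((1:ℝ) / 3) * η ^ ((1:ℝ) / 3) * hset
      - ζ (X s) (Y s) η τ * h23
  simp only [brZZ, hX5e, hY5e, hX4e, hY4e]
  linear_combination (-1 : ℝ) * E1 - 2 * η ^ ((1:ℝ) / 3) * Ξ s * E2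
    + (((fderiv ℝ Zu (X s, Y s, η, τ) ((1:ℝ), (0:ℝ), (0:ℝ), (0:ℝ))) ^ 2 + (1 + X s * b (Y s)) * (fderiv ℝ Zu (X s, Y s, η, τ) ((0:ℝ), (1:ℝ), (0:ℝ), (0:ℝ))) ^ 2) * (fderiv ℝ Zu (X s, Y s, η, τ) ((0:ℝ), (0:ℝ), (0:ℝ), (1:ℝ)))) * hmu13
    - 2 * ((fderiv ℝ Zu (X s, Y s, η, τ) ((1:ℝ), (0:ℝ), (0:ℝ), (0:ℝ))) * (fderiv ℝ (fderiv ℝ Zu) (X s, Y s, η, τ) ((0:ℝ), (0:ℝ), (0:ℝ), (1:ℝ)) ((1:ℝ), (0:ℝ), (0:ℝ), (0:ℝ)))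
      + (1 + X s * b (Y s)) * (fderiv ℝ Zu (X s, Y s, η, τ) ((0:ℝ), (1:ℝ), (0:ℝ), (0:ℝ))) * (fderiv ℝ (fderiv ℝ Zu) (X s, Y s, η, τ) ((0:ℝ), (0:ℝ), (0:ℝ), (1:ℝ)) ((0:ℝ), (1:ℝ), (0:ℝ), (0:ℝ)))) * hζv
end
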